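/- Let f : ℝⁿ × ℝ → ℝⁿ be continuously differentiable in its first (state) variable and continuous in its second (time) variable, let δ : ℝ → ℝⁿ be continuous, and let α : [t₀,∞) → ℝ be continuous with ∫_{t₀}^{∞} α(τ) dτ = ∞. Assume that for all x ∈ ℝⁿ, all t ≥ t₀, and all v ∈ ℝⁿ, ⟪Dₓf(x,t) v, v⟫ ≤ −α(t) ‖v‖². If x, x* : [t₀,∞) → ℝⁿ are two differentiable functions satisfying x'(t) = f(x(t), t) + δ(t) and x*'(t) = f(x*(t), t) + δ(t) for all t ≥ t₀, then ‖x(t) − x*(t)‖ → 0 as t → ∞ (all solutions converge to one another asymptotically, though not necessarily uniformly or exponentially). -/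

import Mathlib

/-!
Along the segment from `x* t` to `x t`, the bound on the Jacobian integrates to the one-sided
Lipschitz estimate `⟪f(x,t) - f(x*,t), x - x*⟫ ≤ -α(t) ‖x - x*‖²`. Hence `e = x - x*` satisfies
`d/dt ‖e‖² ≤ -2α ‖e‖²`, so `‖e t‖² · exp (2 ∫_{t₀}^t α)` is nonincreasing and
`‖e t‖² ≤ ‖e t₀‖² · exp (-2 ∫_{t₀}^t α) → 0`.
-/

open Filter Topology Set
open scoped RealInnerProductSpace

variable {E : Type*} [NormedAddCommGroup E] [InnerProductSpace ℝ E]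

theorem inner_sub_le_of_inner_fderiv_le {F : E → E} {a : ℝ} (hF : Differentiable ℝ F)
    (h : ∀ y v, ⟪fderiv ℝ F y v, v⟫ ≤ -a * ‖v‖ ^ 2) (x y : E) :
    ⟪F x - F y, x - y⟫ ≤ -a * ‖x - y‖ ^ 2 := by
  set v := x - y
  have hψ : ∀ s : ℝ,
      HasDerivAt (fun s : ℝ => ⟪F (y + s • v), v⟫) ⟪fderiv ℝ F (y + s • v) v, v⟫ s :=
    fun s => ((hF _).hasFDerivAt.comp_hasDerivAt s
      ((hasDerivAt_id s).smul_const v |>.const_add y |>.congr_deriv (one_smul ℝ v))).inner ℝ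
      (hasDerivAt_const s v) |>.congr_deriv (by simp)
  have := image_sub_le_mul_sub_of_deriv_le (fun s => (hψ s).differentiableAt)
    (fun s => (hψ s).deriv ▸ h _ v) zero_le_one
  simpa [v, inner_sub_left] using this

theorem hasDerivAt_integral_of_continuousOn {α : ℝ → ℝ} {a b t : ℝ}
    (hα : ContinuousOn α (Icc a b)) (ht : t ∈ Ioo a b) :
    HasDerivAt (fun u => ∫ τ in a..u, α τ) (α t) t :=
  intervalIntegral.integral_hasDerivAt_right
    ((hα.mono (Icc_subset_Icc_right ht.2.le)).intervalIntegrable_of_Icc ht.1.le)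
    ((hα.mono Ioo_subset_Icc_self).stronglyMeasurableAtFilter isOpen_Ioo t ht)
    (hα.continuousAt (Icc_mem_nhds ht.1 ht.2))

theorem norm_sq_mul_exp_integral_le {e e' : ℝ → E} {α : ℝ → ℝ} {t₀ T : ℝ} (hT : t₀ ≤ T)
    (hα : ContinuousOn α (Icc t₀ T)) (he : ∀ t ∈ Icc t₀ T, HasDerivAt e (e' t) t)
    (hdecay : ∀ t ∈ Ioo t₀ T, ⟪e' t, e t⟫ ≤ -α t * ‖e t‖ ^ 2) :
    ‖e T‖ ^ 2 * Real.exp (2 * ∫ τ in t₀..T, α τ) ≤ ‖e t₀‖ ^ 2 := by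
  set A := fun u => ∫ τ in t₀..u, α τ
  set g := fun u => ‖e u‖ ^ 2 * Real.exp (2 * A u)
  have hA : ContinuousOn A (Icc t₀ T) := by
    simpa only [uIcc_of_le hT] using
      intervalIntegral.continuousOn_primitive_interval' (hα.intervalIntegrable_of_Icc hT)
        left_mem_uIcc
  have hg_cont : ContinuousOn g (Icc t₀ T) :=
    (continuousOn_of_forall_continuousAt fun t ht => (he t ht).continuousAt.norm.pow 2).mul
      (continuousOn_const.mul hA).rexp
  have hg_deriv : ∀ t ∈ Ioo t₀ T, HasDerivAt g
      (2 * ⟪e t, e' t⟫ * Real.exp (2 * A t) + ‖e t‖ ^ 2 * (Real.exp (2 * A t) * (2 * α t))) t :=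
    fun t ht => ((he t (Ioo_subset_Icc_self ht)).norm_sq).mul
      ((hasDerivAt_integral_of_continuousOn hα ht).const_mul 2).exp
  have hg_anti : AntitoneOn g (Icc t₀ T) := by
    refine antitoneOn_of_deriv_nonpos (convex_Icc t₀ T) hg_cont ?_ ?_ <;> rw [interior_Icc]
    · exact fun t ht => (hg_deriv t ht).differentiableAt.differentiableWithinAt
    · intro t ht
      rw [(hg_deriv t ht).deriv, real_inner_comm]
      nlinarith [hdecay t ht, Real.exp_pos (2 * A t)]
  simpa [g, A] using hg_anti (left_mem_Icc.2 hT) (right_mem_Icc.2 hT) hT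

theorem tendsto_norm_zero_of_inner_deriv_le {e e' : ℝ → E} {α : ℝ → ℝ} {t₀ : ℝ}
    (hα : ContinuousOn α (Ici t₀)) (hαdiv : Tendsto (fun T => ∫ τ in t₀..T, α τ) atTop atTop)
    (he : ∀ t, t₀ ≤ t → HasDerivAt e (e' t) t)
    (hdecay : ∀ t, t₀ ≤ t → ⟪e' t, e t⟫ ≤ -α t * ‖e t‖ ^ 2) :
    Tendsto (fun t => ‖e t‖) atTop (𝓝 0) := by
  have hbound : ∀ T, t₀ ≤ T →
      ‖e T‖ ^ 2 ≤ ‖e t₀‖ ^ 2 * Real.exp (-(2 * ∫ τ in t₀..T, α τ)) := by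
    intro T hT
    rw [Real.exp_neg, ← div_eq_mul_inv, le_div_iff₀ (Real.exp_pos _)]
    exact norm_sq_mul_exp_integral_le hT (hα.mono Icc_subset_Ici_self)
      (fun t ht => he t ht.1) (fun t ht => hdecay t ht.1.le)
  have hlim :
      Tendsto (fun T => ‖e t₀‖ ^ 2 * Real.exp (-(2 * ∫ τ in t₀..T, α τ))) atTop (𝓝 0) := by
    simpa using (Real.tendsto_exp_atBot.comp
      (tendsto_neg_atTop_atBot.comp (hαdiv.const_mul_atTop two_pos))).const_mul (‖e t₀‖ ^ 2)
  have hsq : Tendsto (fun t => ‖e t‖ ^ 2) atTop (𝓝 0) :=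
    squeeze_zero' (Eventually.of_forall fun t => by positivity)
      ((eventually_ge_atTop t₀).mono hbound) hlim
  simpa using hsq.sqrt

theorem solutions_converge_to_each_other_general {n : ℕ} (t₀ : ℝ)
    (f : EuclideanSpace ℝ (Fin n) → ℝ → EuclideanSpace ℝ (Fin n))
    (δ : ℝ → EuclideanSpace ℝ (Fin n))
    (hf : ∀ t, t₀ ≤ t → ContDiff ℝ 1 (fun y => f y t))
    (α : ℝ → ℝ) (hα : ContinuousOn α (Set.Ici t₀))
    (hαdiv : Tendsto (fun T => ∫ τ in t₀..T, α τ) atTop atTop)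
    (hμ : ∀ (x : EuclideanSpace ℝ (Fin n)) (t : ℝ), t₀ ≤ t →
      ∀ v : EuclideanSpace ℝ (Fin n),
        ⟪fderiv ℝ (fun y => f y t) x v, v⟫ ≤ -α t * ‖v‖ ^ 2)
    (x xs : ℝ → EuclideanSpace ℝ (Fin n))
    (hx : ∀ t, t₀ ≤ t → HasDerivAt x (f (x t) t + δ t) t)
    (hxs : ∀ t, t₀ ≤ t → HasDerivAt xs (f (xs t) t + δ t) t) :
    Tendsto (fun t => ‖x t - xs t‖) atTop (𝓝 0) := by
  have hdiff : ∀ t, t₀ ≤ t → HasDerivAt (fun s => x s - xs s) (f (x t) t - f (xs t) t) t :=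
    fun t ht => ((hx t ht).sub (hxs t ht)).congr_deriv (add_sub_add_right_eq_sub _ _ _)
  have hdecay : ∀ t, t₀ ≤ t →
      ⟪f (x t) t - f (xs t) t, x t - xs t⟫ ≤ -α t * ‖x t - xs t‖ ^ 2 := fun t ht =>
    inner_sub_le_of_inner_fderiv_le ((hf t ht).differentiable one_ne_zero)
      (fun y v => hμ y t ht v) (x t) (xs t)
  exact tendsto_norm_zero_of_inner_deriv_le hα hαdiv hdiff hdecay

/-- Remark 2. If `⟪Dₓf(x,t)v, v⟫ ≤ -α(t)‖v‖²` with
`∫_{t₀}^∞ α = ∞`, then any two solutions of `ẋ = f(x,t) + δ(t)` converge to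
one another: `‖x(t) - x*(t)‖ → 0` as `t → ∞`. -/
theorem solutions_converge_to_each_other {n : ℕ} (hn : 1 ≤ n) (t₀ : ℝ)
    (f : EuclideanSpace ℝ (Fin n) → ℝ → EuclideanSpace ℝ (Fin n))
    (δ : ℝ → EuclideanSpace ℝ (Fin n))
    (hf : ∀ t, t₀ ≤ t → ContDiff ℝ 1 (fun y => f y t))
    (hft : ∀ y, ContinuousOn (fun t => f y t) (Set.Ici t₀))
    (hδ : Continuous δ)
    (α : ℝ → ℝ) (hα : ContinuousOn α (Set.Ici t₀))
    (hαdiv : Tendsto (fun T => ∫ τ in t₀..T, α τ) atTop atTop)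
    (hμ : ∀ (x : EuclideanSpace ℝ (Fin n)) (t : ℝ), t₀ ≤ t →
      ∀ v : EuclideanSpace ℝ (Fin n),
        ⟪fderiv ℝ (fun y => f y t) x v, v⟫ ≤ -α t * ‖v‖ ^ 2)
    (x xs : ℝ → EuclideanSpace ℝ (Fin n))
    (hx : ∀ t, t₀ ≤ t → HasDerivAt x (f (x t) t + δ t) t)
    (hxs : ∀ t, t₀ ≤ t → HasDerivAt xs (f (xs t) t + δ t) t) :
    Tendsto (fun t => ‖x t - xs t‖) atTop (𝓝 0) :=
  solutions_converge_to_each_other_general t₀ f δ hf α hα hαdiv hμ x xs hx hxs
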